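/- arXiv:math/0001165 — 5 statements merged into one kernel-verified Lean document; each statement's English description precedes it below -/
import Mathlib

section
/- Let F be a directed forest on vertex set N and D ⊆ N such that no arc of F has its terminus in D. Then for any directed forest G on N, the D-exchange of F by G is a forest. -/
open Relation

/-- The arc relation of a functional digraph: `F i = some j` means there is an arc `i → j`. -/
def Arc {V : Type*} (F : V → Option V) (i j : V) : Prop := F i = some j

/-- A directed forest: a functional digraph (out-degree ≤ 1) without directed circuits. -/
def IsForest {V : Type*} (F : V → Option V) : Prop :=
  ∀ i, ¬ Relation.TransGen (Arc F) i i

/-- `j` is accessible from `i` by a directed walk. -/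
def Reaches {V : Type*} (F : V → Option V) (i j : V) : Prop :=
  Relation.ReflTransGen (Arc F) i j

open Classical in
/-- The `D`-exchange of `F` by `G`: replace the outgoing arcs (in `F`) of vertices of `D`
by their outgoing arcs in `G`. -/
noncomputable def exchange {V : Type*} (D : Set V) (F G : V → Option V) : V → Option V :=
  fun i => if i ∈ D then G i else F i

/-- The set of vertices of the tree of the forest `F` with root `r`. -/
def treeSet {V : Type*} (F : V → Option V) (r : V) : Set V := {i | Reaches F i r}


/-! A walk in the exchange that ends in `D` stays in `D`, because `F` has no arcs into `D`; so a
circuit through `D` is a circuit of `G`, and a circuit avoiding `D` is a circuit of `F`. -/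

namespace Relation.TransGen

variable {α : Type*} {r s : α → α → Prop} {P : α → Prop} {a b : α}

theorem mono_of_forward_closed (hP : ∀ x y, r x y → P x → P y)
    (hrs : ∀ x y, r x y → P x → s x y) (h : TransGen r a b) (ha : P a) : TransGen s a b := by
  induction h using TransGen.head_induction_on with
  | single hab => exact .single (hrs _ _ hab ha)
  | head hac _ ih => exact .head (hrs _ _ hac ha) (ih (hP _ _ hac ha))

theorem mono_of_backward_closed (hP : ∀ x y, r x y → P y → P x)
    (hrs : ∀ x y, r x y → P x → s x y) (h : TransGen r a b) (hb : P b) : TransGen s a b := by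
  induction h with
  | single hab => exact .single (hrs _ _ hab (hP _ _ hab hb))
  | tail _ hcb ih => exact .tail (ih (hP _ _ hcb hb)) (hrs _ _ hcb (hP _ _ hcb hb))

end Relation.TransGen

section Exchange

variable {V : Type*} {D : Set V} {F G : V → Option V} {x y : V}

theorem arc_exchange_of_mem (hx : x ∈ D) : Arc (exchange D F G) x y ↔ Arc G x y := by
  simp only [Arc, exchange, hx, if_true]

theorem arc_exchange_of_notMem (hx : x ∉ D) : Arc (exchange D F G) x y ↔ Arc F x y := by
  simp only [Arc, exchange, hx, if_false]

theorem mem_of_arc_exchange (hD : ∀ i j, Arc F i j → j ∉ D) (h : Arc (exchange D F G) x y)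
    (hy : y ∈ D) : x ∈ D :=
  by_contra fun hx => hD x y ((arc_exchange_of_notMem hx).1 h) hy

end Exchange

/-- If no arc of the forest `F` comes into `D`, then the `D`-exchange of `F` by any forest `G`
is a forest. -/
theorem exchange_isForest_of_no_arc_into {V : Type*} (F G : V → Option V) (D : Set V)
    (hF : IsForest F) (hG : IsForest G)
    (hD : ∀ i j, Arc F i j → j ∉ D) :
    IsForest (exchange D F G) := by
  intro i hi
  by_cases hiD : i ∈ D
  · exact hG i (hi.mono_of_backward_closed (fun _ _ h => mem_of_arc_exchange hD h)
      (fun _ _ h hx => (arc_exchange_of_mem hx).1 h) hiD)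
  · exact hF i (hi.mono_of_forward_closed (P := (· ∉ D))
      (fun _ _ h hx hy => hx (mem_of_arc_exchange hD h hy))
      (fun _ _ h hx => (arc_exchange_of_notMem hx).1 h) hiD)
end

section
/- Let F be a directed forest on vertex set N and D ⊆ N such that no arc of F has its origin in D. Then for any directed forest G on N, the D-exchange of G by F is a forest. -/
open Relation

theorem IsForest.mono {V : Type*} {F G : V → Option V} (hG : IsForest G)
    (h : ∀ i j, Arc F i j → Arc G i j) : IsForest F :=
  fun i hi => hG i (TransGen.mono h i i hi)

theorem arc_of_arc_exchange {V : Type*} {F G : V → Option V} {D : Set V}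
    (hD : ∀ i ∈ D, ∀ j, ¬ Arc F i j) {i j : V} (h : Arc (exchange D G F) i j) : Arc G i j := by
  unfold Arc exchange at h
  split_ifs at h with hi
  exacts [absurd h (hD i hi j), h]

theorem exchange_isForest_of_no_arc_out_general {V : Type*} (F G : V → Option V) (D : Set V)
    (hG : IsForest G)
    (hD : ∀ i ∈ D, ∀ j, ¬ Arc F i j) :
    IsForest (exchange D G F) :=
  hG.mono fun _ _ => arc_of_arc_exchange hD

/-- If no arc of the forest `F` comes out of `D`, then the `D`-exchange of any forest `G`
by `F` is a forest. -/
theorem exchange_isForest_of_no_arc_out {V : Type*} (F G : V → Option V) (D : Set V)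
    (hF : IsForest F) (hG : IsForest G)
    (hD : ∀ i ∈ D, ∀ j, ¬ Arc F i j) :
    IsForest (exchange D G F) :=
  exchange_isForest_of_no_arc_out_general F G D hG hD
end

section
/- Let F and G be directed forests on the same vertex set, let T^F be a (connected) tree component of F, and let D be the vertex set of T^F. Then both the D-exchange of F by G and the D-exchange of G by F are forests. -/
/-!
A directed circuit of either exchanged digraph cannot cross between the tree `D` and its
complement: in the `D`-exchange of `G` by `F` the set `D` is closed under arcs (the root of the
tree has no outgoing arc), and in the `D`-exchange of `F` by `G` its complement is. A circuit
through a vertex of the closed set stays in it, and a circuit through a vertex outside it never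
enters it, since from there it could not return. Either way the circuit uses arcs of only one of
the two forests, which is impossible.
-/

open Relation

section

variable {V : Type*}

lemma mem_of_reflTransGen_arc {H : V → Option V} {T : Set V}
    (hT : ∀ i j, Arc H i j → i ∈ T → j ∈ T) {i j : V}
    (h : ReflTransGen (Arc H) i j) (hi : i ∈ T) : j ∈ T := by
  induction h with
  | refl => exact hi
  | tail _ hbc ih => exact hT _ _ hbc ih

lemma transGen_arc_of_eq_on_path {H A : V → Option V} {i j : V}
    (h : TransGen (Arc H) i j)
    (hHA : ∀ k, ReflTransGen (Arc H) i k → TransGen (Arc H) k j → H k = A k) :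
    TransGen (Arc A) i j := by
  induction h with
  | single hij =>
      exact .single ((hHA _ .refl (.single hij)).symm.trans hij)
  | @tail b c hib hbc ih =>
      have hb : A b = some c := (hHA b hib.to_reflTransGen (.single hbc)).symm.trans hbc
      exact .tail (ih fun k hik hkb => hHA k hik (hkb.tail hbc)) hb

lemma IsForest.of_eq_on_closed {H A B : V → Option V} {T : Set V}
    (hT : ∀ i j, Arc H i j → i ∈ T → j ∈ T)
    (hA : ∀ i ∈ T, H i = A i) (hB : ∀ i ∉ T, H i = B i)
    (hAf : IsForest A) (hBf : IsForest B) : IsForest H := by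
  intro i hcycle
  by_cases hi : i ∈ T
  · exact hAf i <| transGen_arc_of_eq_on_path hcycle fun k hik _ =>
      hA k (mem_of_reflTransGen_arc hT hik hi)
  · exact hBf i <| transGen_arc_of_eq_on_path hcycle fun k _ hki =>
      hB k fun hk => hi (mem_of_reflTransGen_arc hT hki.to_reflTransGen hk)

lemma exchange_of_mem {D : Set V} {F G : V → Option V} {i : V} (hi : i ∈ D) :
    exchange D F G i = G i := by
  simp [exchange, hi]

lemma exchange_of_notMem {D : Set V} {F G : V → Option V} {i : V} (hi : i ∉ D) :
    exchange D F G i = F i := by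
  simp [exchange, hi]

lemma mem_treeSet_of_arc {F : V → Option V} {r i j : V} (hij : Arc F i j)
    (hj : j ∈ treeSet F r) : i ∈ treeSet F r :=
  ReflTransGen.head hij hj

lemma mem_treeSet_of_arc_of_mem {F : V → Option V} {r i j : V} (hr : F r = none)
    (hij : Arc F i j) (hi : i ∈ treeSet F r) : j ∈ treeSet F r := by
  rcases ReflTransGen.cases_head hi with rfl | ⟨k, hik, hkr⟩
  · simp [Arc, hr] at hij
  · rwa [Option.some.inj (hik.symm.trans hij)] at hkr

end

/-- If `D` is the vertex set of a tree of the forest `F` (the tree with root `r`), then both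
the `D`-exchange of `F` by `G` and the `D`-exchange of `G` by `F` are forests. -/
theorem exchange_isForest_of_treeSet {V : Type*} (F G : V → Option V) (r : V)
    (hF : IsForest F) (hG : IsForest G) (hr : F r = none) :
    IsForest (exchange (treeSet F r) F G) ∧ IsForest (exchange (treeSet F r) G F) := by
  constructor
  · refine IsForest.of_eq_on_closed (T := (treeSet F r)ᶜ) ?_
      (fun i hi => exchange_of_notMem hi) (fun i hi => exchange_of_mem (not_not.mp hi)) hF hG
    intro i j hij hi hj
    exact hi (mem_treeSet_of_arc ((exchange_of_notMem hi).symm.trans hij) hj)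
  · refine IsForest.of_eq_on_closed (T := treeSet F r) ?_
      (fun i hi => exchange_of_mem hi) (fun i hi => exchange_of_notMem hi) hF hG
    intro i j hij hi
    exact mem_treeSet_of_arc_of_mem hr ((exchange_of_mem hi).symm.trans hij) hi
end

section
/- Let V be a weighted digraph on N vertices such that spanning forests with exactly k trees exist. Then every minimal-weight spanning forest G with k trees has an 'ancestor' among the minimal-weight spanning forests with k+1 trees: that is, there exists a minimal-weight spanning (k+1)-forest F whose trees, after suitable numbering, satisfy T^F_i = T^G_i for i = 1,…,k-1, T^F_k ⊆ T^G_k, and the subgraph of G induced by the vertex set of T^F_{k+1} is a tree. -/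
open Relation

section Weighted

variable {V : Type*} [Fintype V] [DecidableEq V]

/-- A spanning forest of the digraph with arc relation `A`. -/
def IsSpanningForest (A : V → V → Prop) (F : V → Option V) : Prop :=
  IsForest F ∧ ∀ i j, F i = some j → A i j

/-- The number of trees (= roots) of a forest. -/
def numTrees (F : V → Option V) : ℕ :=
  (Finset.univ.filter (fun i => F i = none)).card

/-- The weight of a forest: the sum of the weights of its arcs. -/
noncomputable def weight (w : V → V → ℝ) (F : V → Option V) : ℝ :=
  ∑ i, (F i).elim 0 (w i)

/-- `F` is a minimal-weight (extreme) spanning forest with `k` trees. -/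
def ExtremeForest (A : V → V → Prop) (w : V → V → ℝ) (k : ℕ) (F : V → Option V) : Prop :=
  IsSpanningForest A F ∧ numTrees F = k ∧
    ∀ G, IsSpanningForest A G → numTrees G = k → weight w F ≤ weight w G

/-- `φ_k`: the minimum weight of a spanning forest with exactly `k` trees. -/
noncomputable def phi (A : V → V → Prop) (w : V → V → ℝ) (k : ℕ) : ℝ :=
  sInf (weight w '' {F | IsSpanningForest A F ∧ numTrees F = k})

end Weighted

/-- Arc relation of the subgraph induced by the set `S`. -/
def ArcOn {V : Type*} (F : V → Option V) (S : Set V) (i j : V) : Prop :=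
  F i = some j ∧ i ∈ S ∧ j ∈ S

/-- The subgraph of the forest `F` induced by `S` is a tree: all vertices of `S` reach a
common root inside `S`. -/
def IsTreeOn {V : Type*} (F : V → Option V) (S : Set V) : Prop :=
  ∃ r ∈ S, ∀ i ∈ S, Relation.ReflTransGen (ArcOn F S) i r

/-! An extreme `(k+1)`-forest `H` has a root `a` whose tree contains no root of `G`, since `G`
has fewer roots. Swapping arcs between `H` and `G` keeps both extreme as long as both stay
forests with the same numbers of trees: the total weight is unchanged and neither can drop
below its minimum. Swapping outside the tree of `a`, we may assume `H` agrees with `G` off that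
tree `T`. If `G` leaves `T` through a single vertex, then `G` restricted to `T` is a tree and `H`
is the required ancestor. Otherwise let `S` be the set of `G`-ancestors of the exit reached
from `a`; swapping the arcs on `T \ S` keeps `H` extreme and confines the tree of `a` to
`S ⊊ T`, so we conclude by induction on `|T|`. -/

open Relation

/-- In the paper's numbering of the trees, `a` is the `k`-th root and `b` the `(k+1)`-st. -/
def IsAncestor {V : Type*} (F G : V → Option V) (a b : V) : Prop :=
  a ≠ b ∧ F a = none ∧ F b = none ∧ G a = none ∧
    treeSet F a ⊂ treeSet G a ∧ IsTreeOn G (treeSet F b) ∧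
    ∀ r, F r = none → r ≠ a → r ≠ b → G r = none ∧ treeSet F r = treeSet G r

def SplitsOff {V : Type*} (G F : V → Option V) (a : V) : Prop :=
  F a = none ∧ (∀ i ∉ treeSet F a, F i = G i) ∧ ∀ i ∈ treeSet F a, G i ≠ none

def IsSinkOn {V : Type*} (G : V → Option V) (T : Set V) (z : V) : Prop :=
  z ∈ T ∧ ∀ j, G z = some j → j ∉ T

section Forest

variable {V : Type*} {F G : V → Option V} {S T : Set V} {i j r r' : V}

theorem eq_of_reaches_of_eq_none (h : Reaches F i r) (hi : F i = none) : i = r := by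
  rcases ReflTransGen.cases_head h with rfl | ⟨c, hc, -⟩
  · rfl
  · exact absurd (hi.symm.trans hc) nofun

theorem eq_of_reaches_of_reaches (hr : F r = none) (hr' : F r' = none)
    (h : Reaches F i r) (h' : Reaches F i r') : r = r' := by
  have hF : Relator.RightUnique (Arc F) :=
    fun _ _ _ h₁ h₂ => Option.some.inj (h₁.symm.trans h₂)
  rcases ReflTransGen.total_of_right_unique hF h h' with t | t
  · exact eq_of_reaches_of_eq_none t hr
  · exact (eq_of_reaches_of_eq_none t hr').symm

theorem mem_of_reaches (hS : ∀ p ∈ S, ∀ q, F p = some q → q ∈ S) (h : Reaches F i j)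
    (hi : i ∈ S) : j ∈ S := by
  induction h with
  | refl => exact hi
  | tail _ hbc ih => exact hS _ ih _ hbc

theorem reaches_iff_of_eqOn (hS : ∀ p ∈ S, ∀ q, F p = some q → q ∈ S)
    (hFG : ∀ p ∈ S, F p = G p) (hi : i ∈ S) : Reaches F i j ↔ Reaches G i j := by
  suffices key : ∀ {F G : V → Option V}, (∀ p ∈ S, ∀ q, F p = some q → q ∈ S) →
      (∀ p ∈ S, F p = G p) → ∀ {i}, i ∈ S → Reaches F i j → Reaches G i j from
    ⟨key hS hFG hi, key (fun p hp q hq => hS p hp q ((hFG p hp).trans hq))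
      (fun p hp => (hFG p hp).symm) hi⟩
  intro F G hS hFG i hi h
  induction h using ReflTransGen.head_induction_on with
  | refl => exact .refl
  | head hic _ ih =>
    exact ReflTransGen.head ((hFG _ hi).symm.trans hic) (ih (hS _ hi _ hic))

theorem treeSet_subset_of_mem (ha : r ∈ S) (hS : ∀ p q, F p = some q → q ∈ S → p ∈ S) :
    treeSet F r ⊆ S := by
  intro i (hi : Reaches F i r)
  induction hi using ReflTransGen.head_induction_on with
  | refl => exact ha
  | head hic _ ih => exact hS _ _ hic ih

theorem mem_treeSet_of_eq_some (hij : F i = some j) (hj : j ∈ treeSet F r) : i ∈ treeSet F r :=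
  ReflTransGen.head hij hj

theorem mem_treeSet_of_mem_of_eq_some (hr : F r = none) (hi : i ∈ treeSet F r)
    (hij : F i = some j) : j ∈ treeSet F r := by
  rcases ReflTransGen.cases_head hi with rfl | ⟨c, hc : F i = some c, hcr⟩
  · exact absurd (hr.symm.trans hij) nofun
  · exact Option.some.inj (hc.symm.trans hij) ▸ hcr

theorem exists_reaches_eq_none [Finite V] (hF : IsForest F) (i : V) :
    ∃ r, Reaches F i r ∧ F r = none := by
  have : IsTrans V (flip (TransGen (Arc F))) := ⟨fun _ _ _ h₁ h₂ => h₂.trans h₁⟩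
  have : Std.Irrefl (flip (TransGen (Arc F))) := ⟨hF⟩
  induction i using (Finite.wellFounded_of_trans_of_irrefl (flip (TransGen (Arc F)))).induction
    with | _ x ih
  cases hx : F x with
  | none => exact ⟨x, .refl, hx⟩
  | some j =>
    obtain ⟨r, hr, hr0⟩ := ih j (.single hx)
    exact ⟨r, .head hx hr, hr0⟩

theorem exists_isSinkOn (h : Reaches G i r) (hr : G r = none) (hi : i ∈ T) :
    ∃ z, IsSinkOn G T z ∧ ReflTransGen (ArcOn G T) i z := by
  induction h using ReflTransGen.head_induction_on with
  | refl => exact ⟨r, ⟨hi, fun j hj => absurd (hr.symm.trans hj) nofun⟩, .refl⟩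
  | @head p c hpc _ ih =>
    by_cases hc : c ∈ T
    · obtain ⟨z, hz, hcz⟩ := ih hc
      exact ⟨z, hz, .head ⟨hpc, hi, hc⟩ hcz⟩
    · refine ⟨p, ⟨hi, fun j hj => ?_⟩, .refl⟩
      rwa [← Option.some.inj ((hpc : G p = some c).symm.trans hj)]

theorem exchange_of_mem_s7 (h : i ∈ S) : exchange S F G i = G i := if_pos h

theorem exchange_of_notMem_s7 (h : i ∉ S) : exchange S F G i = F i := if_neg h

theorem isForest_exchange (hF : IsForest F) (hG : IsForest G)
    (hS : ∀ p ∈ S, ∀ q, G p = some q → q ∈ S) : IsForest (exchange S F G) := by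
  have hE : ∀ p ∈ S, exchange S F G p = G p := fun p hp => exchange_of_mem_s7 hp
  have hSE : ∀ p ∈ S, ∀ q, exchange S F G p = some q → q ∈ S :=
    fun p hp q hq => hS p hp q ((hE p hp).symm.trans hq)
  intro x hx
  by_cases hxS : x ∈ S
  · -- a cycle through `S` never leaves `S`, so it is a cycle of `G`
    suffices ∀ y, TransGen (Arc (exchange S F G)) x y → TransGen (Arc G) x y from
      hG x (this x hx)
    intro y hxy
    induction hxy with
    | single hxb => exact .single ((hE x hxS).symm.trans hxb)
    | @tail b c hxb hbc ih =>
      exact ih.tail ((hE b (mem_of_reaches hSE hxb.to_reflTransGen hxS)).symm.trans hbc)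
  · suffices ∀ y, TransGen (Arc (exchange S F G)) y x → TransGen (Arc F) y x from
      hF x (this x hx)
    intro y hyx
    induction hyx using TransGen.head_induction_on with
    | @single p hpx =>
      exact .single ((exchange_of_notMem_s7 fun hp => hxS (hSE p hp x hpx)).symm.trans hpx)
    | @head p c hpc hcx ih =>
      have hp : p ∉ S := fun hp => hxS (mem_of_reaches hSE (.head hpc hcx.to_reflTransGen) hp)
      exact .head ((exchange_of_notMem_s7 hp).symm.trans hpc) ih

end Forest

section Weighted

variable {V : Type*} [Fintype V] {A : V → V → Prop} {w : V → V → ℝ}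
  {F G F' G' H : V → Option V} {a : V} {k m n : ℕ}

theorem numTrees_congr (h : ∀ i, F i = none ↔ G i = none) : numTrees F = numTrees G := by
  unfold numTrees
  congr 1
  exact Finset.filter_congr fun i _ => h i

theorem numTrees_eq_succ (h : ∀ i, F i = none ↔ i = a ∨ G i = none) (ha : G a ≠ none) :
    numTrees F = numTrees G + 1 := by
  classical
  unfold numTrees
  rw [← Finset.card_insert_of_notMem (s := Finset.univ.filter (G · = none)) (a := a) (by simpa)]
  congr 1
  ext i
  simpa using h i

theorem weight_add_weight_of_swap
    (h : ∀ i, (F' i = F i ∧ G' i = G i) ∨ (F' i = G i ∧ G' i = F i)) :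
    weight w F' + weight w G' = weight w F + weight w G := by
  unfold weight
  rw [← Finset.sum_add_distrib, ← Finset.sum_add_distrib]
  refine Finset.sum_congr rfl fun i _ => ?_
  rcases h i with ⟨h₁, h₂⟩ | ⟨h₁, h₂⟩ <;> rw [h₁, h₂]
  exact add_comm _ _

theorem ExtremeForest.of_swap (hF : ExtremeForest A w m F) (hG : ExtremeForest A w n G)
    (h : ∀ i, (F' i = F i ∧ G' i = G i) ∨ (F' i = G i ∧ G' i = F i))
    (hF' : IsForest F') (hG' : IsForest G') (hm : numTrees F' = m) (hn : numTrees G' = n) :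
    ExtremeForest A w m F' := by
  have hspan : ∀ {E}, IsForest E → (∀ i, E i = F i ∨ E i = G i) → IsSpanningForest A E :=
    fun hE hEFG => ⟨hE, fun i j hij => (hEFG i).elim
      (fun hi => hF.1.2 i j (hi.symm.trans hij)) (fun hi => hG.1.2 i j (hi.symm.trans hij))⟩
  have hF'sp := hspan hF' fun i => (h i).imp And.left And.left
  have hG'sp := hspan hG' fun i => ((h i).imp And.right And.right).symm
  have hsum := weight_add_weight_of_swap (w := w) h
  have h₁ := hF.2.2 F' hF'sp hm
  have h₂ := hG.2.2 G' hG'sp hn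
  exact ⟨hF'sp, hm, fun E hE hEm => by linarith [hF.2.2 E hE hEm]⟩

theorem exists_extremeForest (h : ∃ F, IsSpanningForest A F ∧ numTrees F = m) :
    ∃ F, ExtremeForest A w m F := by
  obtain ⟨F, ⟨hF, hFm⟩, hmin⟩ := Set.exists_min_image _ (weight w) (Set.toFinite _) h
  exact ⟨F, hF, hFm, fun G hG hGm => hmin G ⟨hG, hGm⟩⟩

theorem IsSpanningForest.exists_numTrees_succ (hF : IsSpanningForest A F)
    (h : numTrees F < Fintype.card V) :
    ∃ F', IsSpanningForest A F' ∧ numTrees F' = numTrees F + 1 := by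
  classical
  obtain ⟨b, hb⟩ : ∃ b, F b ≠ none := by
    by_contra! hroots
    simp [numTrees, hroots] at h
  have hsub : ∀ i j, Function.update F b none i = some j → F i = some j := by
    intro i j hij
    rcases eq_or_ne i b with rfl | hib
    · simp at hij
    · rwa [Function.update_of_ne hib] at hij
  refine ⟨Function.update F b none,
    ⟨fun x hx => hF.1 x (TransGen.mono hsub _ _ hx), fun i j hij => hF.2 i j (hsub i j hij)⟩,
    numTrees_eq_succ (fun i => ?_) hb⟩
  rcases eq_or_ne i b with rfl | hib <;> simp [*]

theorem exists_eq_none_forall_mem_treeSet_ne_none (h : numTrees G < numTrees H) :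
    ∃ a, H a = none ∧ ∀ i ∈ treeSet H a, G i ≠ none := by
  by_contra! hall
  choose! f hfH hfG using hall
  refine h.not_ge (Finset.card_le_card_of_injOn f (fun a ha => ?_) fun a ha b hb hab => ?_)
  · simp_all
  · simp only [Finset.coe_filter, Finset.mem_univ, true_and, Set.mem_ofPred_eq] at ha hb
    exact eq_of_reaches_of_reaches ha hb (hfH a ha) (hab ▸ hfH b hb)

end Weighted

section Ancestor

variable {V : Type*} [Fintype V] {A : V → V → Prop} {w : V → V → ℝ}
  {F G H : V → Option V} {a : V} {k : ℕ}

theorem ExtremeForest.exchange_treeSet (hG : ExtremeForest A w k G)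
    (hH : ExtremeForest A w (k + 1) H) (ha : H a = none)
    (hT : ∀ i ∈ treeSet H a, G i ≠ none) :
    ExtremeForest A w (k + 1) (exchange (treeSet H a) G H) := by
  set T := treeSet H a
  have haT : a ∈ T := .refl
  have hHroot : ∀ i ∈ T, H i = none ↔ i = a :=
    fun i hi => ⟨eq_of_reaches_of_eq_none hi, by rintro rfl; exact ha⟩
  set F := exchange T G H
  set M := exchange Tᶜ G H
  have hFT : ∀ i ∈ T, F i = H i := fun i hi => exchange_of_mem_s7 hi
  have hFTc : ∀ i ∉ T, F i = G i := fun i hi => exchange_of_notMem_s7 hi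
  have hMT : ∀ i ∈ T, M i = G i := fun i hi => exchange_of_notMem_s7 (not_not_intro hi)
  have hMTc : ∀ i ∉ T, M i = H i := fun i hi => exchange_of_mem_s7 (show i ∈ Tᶜ from hi)
  have hswap : ∀ i, (F i = H i ∧ M i = G i) ∨ (F i = G i ∧ M i = H i) := by
    intro i
    by_cases hi : i ∈ T
    · exact .inl ⟨hFT i hi, hMT i hi⟩
    · exact .inr ⟨hFTc i hi, hMTc i hi⟩
  have hFroots : ∀ i, F i = none ↔ i = a ∨ G i = none := by
    intro i
    by_cases hi : i ∈ T
    · rw [hFT i hi, hHroot i hi]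
      exact ⟨.inl, fun h => h.resolve_right (hT i hi)⟩
    · rw [hFTc i hi]
      exact ⟨.inr, fun h => h.resolve_left fun hia => hi (hia ▸ haT)⟩
  have hMroots : ∀ i, H i = none ↔ i = a ∨ M i = none := by
    intro i
    by_cases hi : i ∈ T
    · rw [hMT i hi, hHroot i hi]
      exact ⟨.inl, fun h => h.resolve_right (hT i hi)⟩
    · rw [hMTc i hi]
      exact ⟨.inr, fun h => h.resolve_left fun hia => hi (hia ▸ haT)⟩
  have hMa : M a ≠ none := by rw [hMT a haT]; exact hT a haT
  refine hH.of_swap hG hswap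
    (isForest_exchange hG.1.1 hH.1.1 fun p hp q => mem_treeSet_of_mem_of_eq_some ha hp)
    (isForest_exchange hG.1.1 hH.1.1 fun p hp q hpq hq => hp (mem_treeSet_of_eq_some hpq hq))
    (by rw [numTrees_eq_succ hFroots (hT a haT), hG.2.1]) ?_
  have := numTrees_eq_succ hMroots hMa
  rw [hH.2.1] at this
  omega

theorem exists_splitsOff (hG : ExtremeForest A w k G) (hH : ExtremeForest A w (k + 1) H)
    (ha : H a = none) (hT : ∀ i ∈ treeSet H a, G i ≠ none) :
    ∃ F, ExtremeForest A w (k + 1) F ∧ SplitsOff G F a ∧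
      treeSet F a ⊆ {i | ∃ d ∈ treeSet H a, Reaches G i d} := by
  set T := treeSet H a
  set F := exchange T G H
  have haT : a ∈ T := .refl
  have hFT : ∀ i ∈ T, F i = H i := fun i hi => exchange_of_mem_s7 hi
  have hFTc : ∀ i ∉ T, F i = G i := fun i hi => exchange_of_notMem_s7 hi
  have hTF : T ⊆ treeSet F a := fun i hi =>
    (reaches_iff_of_eqOn (fun p hp q => mem_treeSet_of_mem_of_eq_some ha hp)
      (fun p hp => (hFT p hp).symm) hi).mp hi
  have hFanc : treeSet F a ⊆ {i | ∃ d ∈ T, Reaches G i d} := by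
    refine treeSet_subset_of_mem ⟨a, haT, .refl⟩ fun p q hpq ⟨d, hd, hqd⟩ => ?_
    by_cases hp : p ∈ T
    · exact ⟨p, hp, .refl⟩
    · exact ⟨d, hd, .head ((hFTc p hp).symm.trans hpq) hqd⟩
  refine ⟨F, hG.exchange_treeSet hH ha hT, ⟨(hFT a haT).trans ha,
    fun i hi => hFTc i fun hiT => hi (hTF hiT), fun i hi hGi => ?_⟩, hFanc⟩
  obtain ⟨d, hd, hid⟩ := hFanc hi
  exact hT i (eq_of_reaches_of_eq_none hid hGi ▸ hd) hGi

theorem isAncestor_of_subsingleton (hG : IsForest G) (hs : SplitsOff G F a)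
    (hsink : {z | IsSinkOn G (treeSet F a) z}.Subsingleton) : ∃ x, IsAncestor F G x a := by
  obtain ⟨ha, hoff, hT⟩ := hs
  set T := treeSet F a
  have haT : a ∈ T := .refl
  obtain ⟨ra, hara, hra⟩ := exists_reaches_eq_none hG a
  obtain ⟨z, hz, -⟩ := exists_isSinkOn hara hra haT
  have hTz : ∀ i ∈ T, ReflTransGen (ArcOn G T) i z := by
    intro i hi
    obtain ⟨r, hir, hr⟩ := exists_reaches_eq_none hG i
    obtain ⟨z', hz', hiz'⟩ := exists_isSinkOn hir hr hi
    exact hsink hz' hz ▸ hiz'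
  obtain ⟨y, hy⟩ := Option.ne_none_iff_exists'.mp (hT z hz.1)
  obtain ⟨x, hyx, hx⟩ := exists_reaches_eq_none hG y
  have hTx : ∀ i ∈ T, Reaches G i x :=
    fun i hi => (ReflTransGen.mono (fun _ _ h => h.1) _ _ (hTz i hi)).trans (.head hy hyx)
  have hxT : x ∉ T := fun h => hT x h hx
  have hFG : ∀ {i r}, i ∉ T → (Reaches F i r ↔ Reaches G i r) := fun hi =>
    reaches_iff_of_eqOn (S := Tᶜ) (fun p hp q hpq hq => hp (mem_treeSet_of_eq_some hpq hq))
      hoff hi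
  have hnotT : ∀ {r i}, F r = none → r ≠ a → Reaches F i r → i ∉ T :=
    fun hr hra hi hiT => hra (eq_of_reaches_of_reaches hr ha hi hiT)
  have hFx : F x = none := (hoff x hxT).trans hx
  have hxa : x ≠ a := fun h => hxT (h ▸ haT)
  refine ⟨x, hxa, hFx, ha, hx, ?_, ⟨z, hz.1, hTz⟩, fun r hr hrx hra => ?_⟩
  · refine (Set.ssubset_iff_of_subset fun i hi => ?_).mpr
      ⟨z, hTx z hz.1, fun hzx => hnotT hFx hxa hzx hz.1⟩
    exact (hFG (hnotT hFx hxa hi)).mp hi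
  · have hrT : r ∉ T := fun h => hra (eq_of_reaches_of_eq_none h hr)
    have hGr : G r = none := (hoff r hrT).symm.trans hr
    refine ⟨hGr, Set.ext fun i => ⟨fun hi => (hFG (hnotT hr hra hi)).mp hi, fun hi => ?_⟩⟩
    exact (hFG fun hiT => hrx (eq_of_reaches_of_reaches hGr hx hi (hTx i hiT))).mpr hi

/-- The partner forest takes the arcs of `F` exactly on `treeSet F a \ treeSet G z`; both stay
forests because `G` leaves `treeSet G z` only at `z`, which leaves `treeSet F a` too. -/
theorem ExtremeForest.exchange_compl_treeSet (hG : ExtremeForest A w k G)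
    (hF : ExtremeForest A w (k + 1) F) (hs : SplitsOff G F a) {z : V}
    (hz : IsSinkOn G (treeSet F a) z) (haz : Reaches G a z) :
    ExtremeForest A w (k + 1) (exchange (treeSet G z)ᶜ F G) := by
  obtain ⟨ha, hoff, hT⟩ := hs
  set T := treeSet F a
  set S := treeSet G z
  set W := T \ S
  have hScG : ∀ p ∈ Sᶜ, ∀ q, G p = some q → q ∈ Sᶜ :=
    fun p hp q hpq hq => hp (mem_treeSet_of_eq_some hpq hq)
  have hWcG : ∀ p ∈ Wᶜ, ∀ q, G p = some q → q ∈ Wᶜ := by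
    rintro p hp q hpq ⟨hqT, hqS⟩
    by_cases hpS : p ∈ S
    · rcases ReflTransGen.cases_head hpS with rfl | ⟨c, hc : G p = some c, hcz⟩
      · exact hz.2 q hpq hqT
      · exact hqS (Option.some.inj (hc.symm.trans hpq) ▸ hcz)
    · have hpT : p ∉ T := fun hpT => hp ⟨hpT, hpS⟩
      exact hpT (mem_treeSet_of_eq_some ((hoff p hpT).trans hpq) hqT)
  set F₁ := exchange Sᶜ F G
  set L := exchange Wᶜ F G
  have hswap : ∀ i, (F₁ i = F i ∧ L i = G i) ∨
      (F₁ i = G i ∧ L i = F i ∧ (F i = none ↔ G i = none)) := by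
    intro i
    by_cases hiS : i ∈ S
    · exact .inl ⟨exchange_of_notMem_s7 (not_not_intro hiS),
        exchange_of_mem_s7 (show i ∈ Wᶜ from fun h => h.2 hiS)⟩
    by_cases hiT : i ∈ T
    · refine .inr ⟨exchange_of_mem_s7 hiS, exchange_of_notMem_s7 (not_not_intro ⟨hiT, hiS⟩), ?_⟩
      have hFi : F i ≠ none := fun h => hiS (eq_of_reaches_of_eq_none hiT h ▸ haz)
      simp only [hFi, hT i hiT]
    · have hFGi := hoff i hiT
      exact .inr ⟨exchange_of_mem_s7 hiS,
        (exchange_of_mem_s7 (show i ∈ Wᶜ from fun h => hiT h.1)).trans hFGi.symm, by rw [hFGi]⟩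
  exact hF.of_swap hG (fun i => (hswap i).imp_right fun h => ⟨h.1, h.2.1⟩)
    (isForest_exchange hF.1.1 hG.1.1 hScG) (isForest_exchange hF.1.1 hG.1.1 hWcG)
    ((numTrees_congr fun i => by rcases hswap i with h | h <;> simp only [h]).trans hF.2.1)
    ((numTrees_congr fun i => by rcases hswap i with h | h <;> simp only [h]).trans hG.2.1)

theorem exists_splitsOff_ncard_lt (hG : ExtremeForest A w k G) (hF : ExtremeForest A w (k + 1) F)
    (hs : SplitsOff G F a) (hsink : ¬ {z | IsSinkOn G (treeSet F a) z}.Subsingleton) :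
    ∃ F', ExtremeForest A w (k + 1) F' ∧ SplitsOff G F' a ∧
      (treeSet F' a).ncard < (treeSet F a).ncard := by
  obtain ⟨ha, hoff, hT⟩ := hs
  set T := treeSet F a
  have haT : a ∈ T := .refl
  obtain ⟨ra, hara, hra⟩ := exists_reaches_eq_none hG.1.1 a
  obtain ⟨za, hza, haza⟩ := exists_isSinkOn hara hra haT
  obtain ⟨zb, hzb, hzbza⟩ : ∃ zb, IsSinkOn G T zb ∧ zb ≠ za := by
    by_contra! h
    exact hsink fun z₁ hz₁ z₂ hz₂ => (h z₁ hz₁).trans (h z₂ hz₂).symm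
  set S := treeSet G za
  have haS : a ∈ S := ReflTransGen.mono (fun _ _ h => h.1) _ _ haza
  have hST : S ⊆ T := treeSet_subset_of_mem hza.1 fun p q hpq hq =>
    by_contra fun hp => hp (mem_treeSet_of_eq_some ((hoff p hp).trans hpq) hq)
  have hzbS : zb ∉ S := by
    intro h
    rcases ReflTransGen.cases_head h with rfl | ⟨c, hc, hcza⟩
    · exact hzbza rfl
    · exact hzb.2 c hc (hST hcza)
  set F₁ := exchange Sᶜ F G
  have hF₁ : ExtremeForest A w (k + 1) F₁ :=
    hG.exchange_compl_treeSet hF ⟨ha, hoff, hT⟩ hza haS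
  have hF₁a : F₁ a = none := (exchange_of_notMem_s7 (not_not_intro haS)).trans ha
  have hF₁S : treeSet F₁ a ⊆ S := treeSet_subset_of_mem haS fun p q hpq hq =>
    by_contra fun hp => hp (mem_treeSet_of_eq_some ((exchange_of_mem_s7 hp).symm.trans hpq) hq)
  obtain ⟨F', hF', hs', hF'anc⟩ :=
    exists_splitsOff hG hF₁ hF₁a fun i hi => hT i (hST (hF₁S hi))
  have hF'S : treeSet F' a ⊆ S := fun i hi => by
    obtain ⟨d, hd, hid⟩ := hF'anc hi
    exact hid.trans (hF₁S hd)
  exact ⟨F', hF', hs', Set.ncard_lt_ncard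
    ((Set.ssubset_iff_of_subset (hF'S.trans hST)).mpr ⟨zb, hzb.1, fun h => hzbS (hF'S h)⟩)⟩

theorem exists_isAncestor_of_splitsOff (hG : ExtremeForest A w k G)
    (hF : ExtremeForest A w (k + 1) F) (hs : SplitsOff G F a) :
    ∃ F', ExtremeForest A w (k + 1) F' ∧ ∃ x b, IsAncestor F' G x b := by
  induction hn : (treeSet F a).ncard using Nat.strong_induction_on generalizing F with
  | _ n ih =>
    by_cases hsink : {z | IsSinkOn G (treeSet F a) z}.Subsingleton
    · obtain ⟨x, hx⟩ := isAncestor_of_subsingleton hG.1.1 hs hsink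
      exact ⟨F, hF, x, a, hx⟩
    · obtain ⟨F', hF', hs', hlt⟩ := exists_splitsOff_ncard_lt hG hF hs hsink
      exact ih _ (hn ▸ hlt) hF' hs' rfl

end Ancestor

theorem extreme_ancestor_exists_general {V : Type*} [Fintype V]
    (A : V → V → Prop) (w : V → V → ℝ) (k : ℕ)
    (hk : 1 ≤ k) (hk' : k ≤ Fintype.card V - 1)
    (G : V → Option V) (hG : ExtremeForest A w k G) :
    ∃ F, ExtremeForest A w (k + 1) F ∧
      ∃ a b, a ≠ b ∧ F a = none ∧ F b = none ∧ G a = none ∧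
        treeSet F a ⊂ treeSet G a ∧ IsTreeOn G (treeSet F b) ∧
        ∀ r, F r = none → r ≠ a → r ≠ b → G r = none ∧ treeSet F r = treeSet G r := by
  obtain ⟨H, hH⟩ := exists_extremeForest (w := w)
    (hG.1.exists_numTrees_succ (by rw [hG.2.1]; omega))
  rw [hG.2.1] at hH
  obtain ⟨a, ha, hT⟩ := exists_eq_none_forall_mem_treeSet_ne_none (G := G) (H := H)
    (by rw [hH.2.1, hG.2.1]; omega)
  obtain ⟨F, hF, hs, -⟩ := exists_splitsOff hG hH ha hT
  exact exists_isAncestor_of_splitsOff hG hF hs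

/-- Every minimal-weight spanning forest `G` with `k` trees has an ancestor among the
minimal-weight spanning forests with `k+1` trees: a forest `F` with two distinguished roots
`a`, `b`, such that all other trees of `F` coincide with trees of `G`, the tree of `F`
rooted at `a` is properly contained in the tree of `G` rooted at `a`, and the subgraph of
`G` induced by the vertex set of the tree of `F` rooted at `b` is a tree. -/
theorem extreme_ancestor_exists {V : Type*} [Fintype V] [DecidableEq V]
    (A : V → V → Prop) (w : V → V → ℝ) (k : ℕ)
    (hk : 1 ≤ k) (hk' : k ≤ Fintype.card V - 1)
    (hEx : ∃ F, IsSpanningForest A F ∧ numTrees F = k)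
    (G : V → Option V) (hG : ExtremeForest A w k G) :
    ∃ F, ExtremeForest A w (k + 1) F ∧
      ∃ a b, a ≠ b ∧ F a = none ∧ F b = none ∧ G a = none ∧
        treeSet F a ⊂ treeSet G a ∧ IsTreeOn G (treeSet F b) ∧
        ∀ r, F r = none → r ≠ a → r ≠ b → G r = none ∧ treeSet F r = treeSet G r :=
  extreme_ancestor_exists_general A w k hk hk' G hG
end

section
/- Let V be a weighted digraph, F a minimal-weight spanning forest with n trees and G a minimal-weight spanning forest with m trees, m ≥ n. Let D be a subset of vertices such that the D-exchange P of F by G and the D-exchange Q of G by F are both forests. If D contains l ≥ m - n more roots of G than roots of F, then P is a minimal-weight spanning forest with n + l trees and Q is a minimal-weight spanning forest with m - l trees. -/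
open Relation

/-!
Exchanging along any set `D` preserves the total weight, `w P + w Q = w F + w G`, and since `D`
holds `l` more roots of `G` than of `F`, `P` and `Q` have `n + l` and `m - l` trees. It remains
to see that `w F + w G ≤ w H + w K` whenever `H` and `K` are spanning forests with `m + k` and
`n - k` trees. For `k > 0`, `H` has more roots than `K`, so by pigeonhole some tree `T` of `H`
contains no root of `K`; exchanging along `T` moves the root of `T` from `H` to `K` and keeps
`w H + w K`, so induction on `k` reduces to `k = 0`, where the claim is the minimality of `F`
and `G`.
-/

section Reaches

variable {V : Type*} {F : V → Option V}

theorem arc_rightUnique (F : V → Option V) : Relator.RightUnique (Arc F) := by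
  intro a b c hb hc
  exact Option.some.inj (hb.symm.trans hc)

theorem Reaches.eq_of_eq_none {i j : V} (h : Reaches F i j) (hi : F i = none) : i = j := by
  rcases h.cases_head with h | ⟨c, hc, -⟩
  · exact h
  · exact absurd (hc.symm.trans hi) (Option.some_ne_none c)

theorem Reaches.root_unique {i r₁ r₂ : V} (h₁ : Reaches F i r₁) (h₂ : Reaches F i r₂)
    (e₁ : F r₁ = none) (e₂ : F r₂ = none) : r₁ = r₂ := by
  rcases ReflTransGen.total_of_right_unique (arc_rightUnique F) h₁ h₂ with h | h
  · exact Reaches.eq_of_eq_none h e₁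
  · exact (Reaches.eq_of_eq_none h e₂).symm

theorem Reaches.of_arc {i j r : V} (h : Reaches F i r) (hr : F r = none) (hij : F i = some j) :
    Reaches F j r := by
  rcases h.cases_head with rfl | ⟨c, hc, hcr⟩
  · exact absurd (hij.symm.trans hr) (Option.some_ne_none j)
  · exact arc_rightUnique F hc hij ▸ hcr

end Reaches

section Exchange

variable {V : Type*} {D : Set V} {F G : V → Option V}

theorem arc_exchange_of_mem_s8 {i j : V} (hi : i ∈ D) (h : Arc (exchange D F G) i j) :
    Arc G i j := by
  simpa [Arc, exchange, hi] using h

theorem arc_exchange_of_notMem_s8 {i j : V} (hi : i ∉ D) (h : Arc (exchange D F G) i j) :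
    Arc F i j := by
  simpa [Arc, exchange, hi] using h

theorem exchange_compl (D : Set V) (F G : V → Option V) :
    exchange D G F = exchange Dᶜ F G := by
  funext i
  by_cases hi : i ∈ D <;> simp [exchange, hi]

theorem walk_exchange_of_notMem (hcl : ∀ i j, i ∉ D → F i = some j → j ∉ D) {i j : V}
    (hi : i ∉ D) (h : ReflTransGen (Arc (exchange D F G)) i j) :
    j ∉ D ∧ ReflTransGen (Arc F) i j := by
  induction h with
  | refl => exact ⟨hi, .refl⟩
  | tail _ hbc ih =>
    have hF := arc_exchange_of_notMem_s8 ih.1 hbc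
    exact ⟨hcl _ _ ih.1 hF, ih.2.tail hF⟩

theorem transGen_exchange_of_mem (hcl : ∀ i j, i ∉ D → F i = some j → j ∉ D) {a i : V}
    (ha : a ∈ D) (hi : i ∈ D) (h : TransGen (Arc (exchange D F G)) a i) :
    TransGen (Arc G) a i := by
  induction h using TransGen.head_induction_on with
  | single h => exact .single (arc_exchange_of_mem_s8 ha h)
  | @head a c hac hci ih =>
    by_cases hc : c ∈ D
    · exact .head (arc_exchange_of_mem_s8 ha hac) (ih hc)
    · exact absurd hi (walk_exchange_of_notMem hcl hc hci.to_reflTransGen).1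

theorem isForest_exchange_s8 (hF : IsForest F) (hG : IsForest G)
    (hcl : ∀ i j, i ∉ D → F i = some j → j ∉ D) : IsForest (exchange D F G) := by
  intro i hcyc
  by_cases hi : i ∈ D
  · exact hG i (transGen_exchange_of_mem hcl hi hi hcyc)
  · obtain ⟨c, hic, hci⟩ := TransGen.head'_iff.mp hcyc
    have hic := arc_exchange_of_notMem_s8 hi hic
    exact hF i (.head' hic (walk_exchange_of_notMem hcl (hcl _ _ hi hic) hci).2)

theorem isForest_exchange_swap (hF : IsForest F) (hG : IsForest G)
    (hcl : ∀ i j, i ∈ D → F i = some j → j ∈ D) : IsForest (exchange D G F) := by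
  rw [exchange_compl]
  exact isForest_exchange_s8 hF hG fun i j hi hij => not_not.mpr (hcl i j (not_not.mp hi) hij)

theorem IsSpanningForest.exchange {A : V → V → Prop} (hF : IsSpanningForest A F)
    (hG : IsSpanningForest A G) (hFG : IsForest (exchange D F G)) :
    IsSpanningForest A (exchange D F G) := by
  refine ⟨hFG, fun i j h => ?_⟩
  by_cases hi : i ∈ D
  · exact hG.2 i j (by simpa [_root_.exchange, hi] using h)
  · exact hF.2 i j (by simpa [_root_.exchange, hi] using h)

end Exchange

section Weight

variable {V : Type*} [Fintype V] {A : V → V → Prop}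

theorem weight_exchange_add_weight_exchange (w : V → V → ℝ) (D : Set V)
    (F G : V → Option V) :
    weight w (exchange D F G) + weight w (exchange D G F) = weight w F + weight w G := by
  simp only [weight, ← Finset.sum_add_distrib]
  refine Finset.sum_congr rfl fun i _ => ?_
  by_cases hi : i ∈ D <;> simp [exchange, hi, add_comm]

theorem numTrees_exchange_add (D : Finset V) (F G : V → Option V) :
    numTrees (exchange (↑D) F G) + (D.filter (F · = none)).card
      = numTrees F + (D.filter (G · = none)).card := by
  classical
  have hD : ∀ X : V → Option V, (D.filter (X · = none)).card =
      (Finset.univ.filter fun i => i ∈ D ∧ X i = none).card := by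
    intro X
    congr 1
    ext
    simp
  simp only [numTrees, hD, Finset.card_filter, ← Finset.sum_add_distrib]
  refine Finset.sum_congr rfl fun i _ => ?_
  by_cases hi : i ∈ D <;> simp [exchange, hi, add_comm]

theorem exists_root_tree_without_roots_of_numTrees_lt {H K : V → Option V}
    (hlt : numTrees K < numTrees H) :
    ∃ r, H r = none ∧ ∀ i, Reaches H i r → K i ≠ none := by
  by_contra! h
  choose! f hf using h
  have : numTrees H ≤ numTrees K := by
    refine Finset.card_le_card_of_injOn f (fun r hr => ?_) (fun r₁ hr₁ r₂ hr₂ heq => ?_)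
    · simpa using (hf r (by simpa using hr)).2
    · have h₁ : H r₁ = none := by simpa using hr₁
      have h₂ : H r₂ = none := by simpa using hr₂
      exact Reaches.root_unique (heq ▸ (hf r₁ h₁).1) (hf r₂ h₂).1 h₁ h₂
  omega

theorem exists_exchange_moving_root (w : V → V → ℝ) {H K : V → Option V}
    (hH : IsSpanningForest A H) (hK : IsSpanningForest A K) (hlt : numTrees K < numTrees H) :
    ∃ H' K', IsSpanningForest A H' ∧ IsSpanningForest A K' ∧
      numTrees H' + 1 = numTrees H ∧ numTrees K' = numTrees K + 1 ∧
      weight w H' + weight w K' = weight w H + weight w K := by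
  classical
  obtain ⟨r, hr, hfree⟩ := exists_root_tree_without_roots_of_numTrees_lt hlt
  set T := Finset.univ.filter (Reaches H · r)
  have hT : ∀ i, i ∈ T ↔ Reaches H i r := by simp [T]
  have hHK : IsForest (exchange (↑T) H K) := isForest_exchange_s8 hH.1 hK.1
    fun i j hi hij hj => hi ((hT i).2 (.head hij ((hT j).1 hj)))
  have hKH : IsForest (exchange (↑T) K H) := isForest_exchange_swap hH.1 hK.1
    fun i j hi hij => (hT j).2 (((hT i).1 hi).of_arc hr hij)
  have hTH : T.filter (H · = none) = {r} := by
    ext i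
    simp only [Finset.mem_filter, hT, Finset.mem_singleton]
    exact ⟨fun ⟨hir, hi⟩ => hir.eq_of_eq_none hi, by rintro rfl; exact ⟨.refl, hr⟩⟩
  have hTK : T.filter (K · = none) = ∅ :=
    Finset.filter_eq_empty_iff.mpr fun i hi => hfree i ((hT i).1 hi)
  have hnHK := numTrees_exchange_add T H K
  have hnKH := numTrees_exchange_add T K H
  rw [hTH, hTK, Finset.card_singleton, Finset.card_empty] at hnHK hnKH
  exact ⟨_, _, hH.exchange hK hHK, hK.exchange hH hKH, by omega, by omega,
    weight_exchange_add_weight_exchange w T H K⟩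

theorem ExtremeForest.weight_add_le {w : V → V → ℝ} {n m : ℕ} {F G : V → Option V}
    (hF : ExtremeForest A w n F) (hG : ExtremeForest A w m G) (hnm : n ≤ m) (k : ℕ)
    {H K : V → Option V} (hH : IsSpanningForest A H) (hK : IsSpanningForest A K)
    (hHk : numTrees H = m + k) (hKk : numTrees K + k = n) :
    weight w F + weight w G ≤ weight w H + weight w K := by
  induction k generalizing H K with
  | zero => linarith [hF.2.2 K hK hKk, hG.2.2 H hH hHk]
  | succ k ih =>
    obtain ⟨H', K', hH', hK', hH'n, hK'n, hw⟩ := exists_exchange_moving_root w hH hK (by omega)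
    linarith [ih hH' hK' (by omega) (by omega)]

end Weight

theorem exchange_extreme_of_more_G_roots_general {V : Type*} [Fintype V]
    (A : V → V → Prop) (w : V → V → ℝ) (n m l : ℕ) (hnm : n ≤ m)
    (F G : V → Option V) (hF : ExtremeForest A w n F) (hG : ExtremeForest A w m G)
    (D : Finset V)
    (hP : IsForest (exchange (↑D) F G)) (hQ : IsForest (exchange (↑D) G F))
    (hl : m - n ≤ l)
    (hcount : (D.filter (fun i => G i = none)).card
      = (D.filter (fun i => F i = none)).card + l) :
    ExtremeForest A w (n + l) (exchange (↑D) F G) ∧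
      ExtremeForest A w (m - l) (exchange (↑D) G F) := by
  have hnP := numTrees_exchange_add D F G
  have hnQ := numTrees_exchange_add D G F
  have hnF := hF.2.1
  have hnG := hG.2.1
  have hPs := hF.1.exchange hG.1 hP
  have hQs := hG.1.exchange hF.1 hQ
  have hw := weight_exchange_add_weight_exchange w D F G
  have key : ∀ H K, IsSpanningForest A H → IsSpanningForest A K →
      numTrees H = n + l → numTrees K = m - l →
      weight w F + weight w G ≤ weight w H + weight w K := fun H K hH hK hHn hKn =>
    hF.weight_add_le hG hnm (l - (m - n)) hH hK (by omega) (by omega)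
  refine ⟨⟨hPs, by omega, fun H hH hHn => ?_⟩, ⟨hQs, by omega, fun K hK hKn => ?_⟩⟩
  · linarith [key H _ hH hQs hHn (by omega)]
  · linarith [key _ K hPs hK (by omega) hKn]

/-- Proposition 3(b): if `D` contains `l ≥ m - n` more roots of `G` than roots of `F`, and
both `D`-exchanges are forests, then the `D`-exchange of `F` by `G` is a minimal-weight
spanning forest with `n + l` trees and the `D`-exchange of `G` by `F` is a minimal-weight
spanning forest with `m - l` trees. -/
theorem exchange_extreme_of_more_G_roots {V : Type*} [Fintype V] [DecidableEq V]
    (A : V → V → Prop) (w : V → V → ℝ) (n m l : ℕ) (hnm : n ≤ m)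
    (F G : V → Option V) (hF : ExtremeForest A w n F) (hG : ExtremeForest A w m G)
    (D : Finset V)
    (hP : IsForest (exchange (↑D) F G)) (hQ : IsForest (exchange (↑D) G F))
    (hl : m - n ≤ l)
    (hcount : (D.filter (fun i => G i = none)).card
      = (D.filter (fun i => F i = none)).card + l) :
    ExtremeForest A w (n + l) (exchange (↑D) F G) ∧
      ExtremeForest A w (m - l) (exchange (↑D) G F) :=
  exchange_extreme_of_more_G_roots_general A w n m l hnm F G hF hG D hP hQ hl hcount
end
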